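/- arXiv:2208.12154 — 3 statements merged into one kernel-verified Lean document; each statement's English description precedes it below -/
import Mathlib

section
/- Let n, k, t be positive integers with t/n ≤ 1/2 and r = n − k, and fix ℓ ∈ F_2^n. If a k × n generator matrix G over F_2 is chosen uniformly at random, then the probability that there exists a nonzero u ∈ F_2^k with |ℓ ⊕ u G| ≤ t is at most 2^{n[H_2(t/n) − r/n]}, where H_2(x) = −x log₂ x − (1−x) log₂(1−x). -/
/-- The binary entropy function `H₂`. -/
noncomputable def binEnt (x : ℝ) : ℝ := -x * Real.logb 2 x - (1 - x) * Real.logb 2 (1 - x)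

open Finset

lemma zmod2_eq_one {a : ZMod 2} (h : a ≠ 0) : a = 1 := by revert a; decide

lemma zmod2_add_self (a : ZMod 2) : a + a = 0 := by revert a; decide

lemma zmod2_ext (a b : ZMod 2) (h : a ≠ 0 ↔ b ≠ 0) : a = b := by revert a b; decide

lemma vecMul_updateRow {k n : ℕ} (u : Fin k → ZMod 2) {i : Fin k} (hi : u i = 1)
    (G : Matrix (Fin k) (Fin n) (ZMod 2)) (v : Fin n → ZMod 2) :
    Matrix.vecMul u (G.updateRow i v) = Matrix.vecMul u G + v + G i := by
  funext j
  have h1 : ∀ (M : Matrix (Fin k) (Fin n) (ZMod 2)), Matrix.vecMul u M j = ∑ m, u m * M m j :=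
    fun M => rfl
  have hsplit : ∀ (M : Matrix (Fin k) (Fin n) (ZMod 2)),
      ∑ m, u m * M m j = u i * M i j + ∑ m ∈ univ.erase i, u m * M m j :=
    fun M => (Finset.add_sum_erase univ _ (mem_univ i)).symm
  have herase : ∑ m ∈ univ.erase i, u m * (G.updateRow i v) m j
      = ∑ m ∈ univ.erase i, u m * G m j :=
    Finset.sum_congr rfl (fun m hm => by rw [Matrix.updateRow_ne (Finset.ne_of_mem_erase hm)])
  show Matrix.vecMul u (G.updateRow i v) j = Matrix.vecMul u G j + v j + G i j
  rw [h1, h1, hsplit, hsplit, herase, Matrix.updateRow_self, hi, one_mul, one_mul]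
  linear_combination - zmod2_add_self (G i j)

lemma f_invol {k n : ℕ} (u : Fin k → ZMod 2) {i : Fin k} (hi : u i = 1) :
    Function.Involutive
      (fun G : Matrix (Fin k) (Fin n) (ZMod 2) => G.updateRow i (Matrix.vecMul u G)) := by
  intro G
  simp only
  rw [vecMul_updateRow u hi]
  have hv : Matrix.vecMul u G + Matrix.vecMul u G + G i = G i := by
    funext j
    simp [zmod2_add_self]
  rw [hv]
  ext j j'
  by_cases hj : j = i
  · subst hj; rw [Matrix.updateRow_self]
  · rw [Matrix.updateRow_ne hj, Matrix.updateRow_ne hj]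

lemma card_fixed_u {k n : ℕ} (u : Fin k → ZMod 2) (hu : u ≠ 0)
    (P : (Fin n → ZMod 2) → Prop) [DecidablePred P] :
    Fintype.card {G : Matrix (Fin k) (Fin n) (ZMod 2) // P (Matrix.vecMul u G)} * 2 ^ n =
      Fintype.card {w : Fin n → ZMod 2 // P w} *
        Fintype.card (Matrix (Fin k) (Fin n) (ZMod 2)) := by
  classical
  obtain ⟨i, hi⟩ : ∃ i, u i ≠ 0 := Function.ne_iff.mp hu
  have hi1 : u i = 1 := zmod2_eq_one hi
  have hf := f_invol (n := n) u hi1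
  have e1 : {G : Matrix (Fin k) (Fin n) (ZMod 2) // P (Matrix.vecMul u G)} ≃
      {H : Matrix (Fin k) (Fin n) (ZMod 2) // P (H i)} :=
    (hf.toPerm _).subtypeEquiv (fun G => by
      simp [Function.Involutive.toPerm, Matrix.updateRow_self])
  have e2 : {H : Matrix (Fin k) (Fin n) (ZMod 2) // P (H i)} ≃
      {w : Fin n → ZMod 2 // P w} × ({ j : Fin k // j ≠ i } → (Fin n → ZMod 2)) :=
    ((Equiv.funSplitAt i (Fin n → ZMod 2)).subtypeEquiv (fun H => Iff.rfl)).trans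
      Equiv.prodSubtypeFstEquivSubtypeProd
  have e3 : Matrix (Fin k) (Fin n) (ZMod 2) ≃
      (Fin n → ZMod 2) × ({ j : Fin k // j ≠ i } → (Fin n → ZMod 2)) :=
    Equiv.funSplitAt i (Fin n → ZMod 2)
  have hW : Fintype.card (Fin n → ZMod 2) = 2 ^ n := by
    simp [Fintype.card_fun]
  rw [Fintype.card_congr (e1.trans e2), Fintype.card_congr e3, Fintype.card_prod,
    Fintype.card_prod, hW]
  ring

lemma card_ball_le (n t : ℕ) :
    Fintype.card {w : Fin n → ZMod 2 // hammingNorm w ≤ t} ≤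
      ∑ i ∈ Finset.range (t + 1), n.choose i := by
  classical
  have hham : ∀ w : Fin n → ZMod 2, hammingNorm w = (univ.filter fun i => w i ≠ 0).card :=
    fun w => rfl
  have hinj : Function.Injective
      (fun w : {w : Fin n → ZMod 2 // hammingNorm w ≤ t} =>
        (⟨univ.filter (fun i => w.1 i ≠ 0), by rw [← hham]; exact w.2⟩ :
          {s : Finset (Fin n) // s.card ≤ t})) := by
    rintro ⟨w, hw⟩ ⟨w', hw'⟩ h
    simp only [Subtype.mk.injEq] at h ⊢
    funext i
    have hmem := Finset.ext_iff.mp h i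
    simp only [Finset.mem_filter, Finset.mem_univ, true_and] at hmem
    exact zmod2_ext _ _ hmem
  refine (Fintype.card_le_of_injective _ hinj).trans ?_
  rw [Fintype.card_subtype]
  refine (Finset.card_le_card (t := (Finset.range (t + 1)).biUnion
      (fun i => Finset.powersetCard i univ)) ?_).trans ?_
  · intro s hs
    simp only [Finset.mem_filter, Finset.mem_univ, true_and] at hs
    simp only [Finset.mem_biUnion, Finset.mem_range, Finset.mem_powersetCard]
    exact ⟨s.card, by omega, Finset.subset_univ s, rfl⟩
  · refine Finset.card_biUnion_le.trans ?_
    refine Finset.sum_le_sum fun i _ => ?_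
    rw [Finset.card_powersetCard, Finset.card_univ, Fintype.card_fin]

lemma binEnt_nonneg {x : ℝ} (h0 : 0 < x) (h1 : x < 1) : 0 ≤ binEnt x := by
  have h2 : Real.logb 2 x ≤ 0 := Real.logb_nonpos (by norm_num) h0.le h1.le
  have h3 : Real.logb 2 (1 - x) ≤ 0 := Real.logb_nonpos (by norm_num) (by linarith) (by linarith)
  unfold binEnt
  nlinarith

lemma sum_choose_le_two_rpow (n t : ℕ) (ht : 0 < t) (hn : 0 < n)
    (hhalf : (t : ℝ) / n ≤ 1 / 2) :
    (∑ i ∈ Finset.range (t + 1), (n.choose i : ℝ)) ≤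
      (2 : ℝ) ^ ((n : ℝ) * binEnt ((t : ℝ) / n)) := by
  have hn' : (0:ℝ) < n := by exact_mod_cast hn
  set p : ℝ := (t : ℝ) / n with hp
  have hp0 : 0 < p := div_pos (by exact_mod_cast ht) hn'
  have hp2 : p ≤ 1 / 2 := hhalf
  have hp1 : p < 1 := lt_of_le_of_lt hp2 (by norm_num)
  have hq0 : 0 < 1 - p := by linarith
  have htn : t ≤ n := by
    have : (t : ℝ) ≤ n := by
      rw [hp, div_le_iff₀ hn'] at hp2; nlinarith
    exact_mod_cast this
  have hX0 : (0:ℝ) < p ^ t * (1 - p) ^ (n - t) := by positivity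
  have step1 : ∀ i, i ≤ t →
      p ^ t * (1 - p) ^ (n - t) ≤ p ^ i * (1 - p) ^ (n - i) := by
    intro i hit
    have h1 : p ^ t = p ^ i * p ^ (t - i) := by rw [← pow_add]; congr 1; omega
    have h2 : (1 - p) ^ (n - i) = (1 - p) ^ (t - i) * (1 - p) ^ (n - t) := by
      rw [← pow_add]; congr 1; omega
    have h3 : p ^ (t - i) ≤ (1 - p) ^ (t - i) :=
      pow_le_pow_left₀ hp0.le (by linarith) _
    have h4 : p ^ i * p ^ (t - i) * (1 - p) ^ (n - t) ≤
        p ^ i * (1 - p) ^ (t - i) * (1 - p) ^ (n - t) := by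
      have h5 : p ^ i * p ^ (t - i) ≤ p ^ i * (1 - p) ^ (t - i) :=
        mul_le_mul_of_nonneg_left h3 (pow_nonneg hp0.le i)
      exact mul_le_mul_of_nonneg_right h5 (pow_nonneg hq0.le _)
    calc p ^ t * (1 - p) ^ (n - t) = p ^ i * p ^ (t - i) * (1 - p) ^ (n - t) := by
          rw [h1]
      _ ≤ p ^ i * (1 - p) ^ (t - i) * (1 - p) ^ (n - t) := h4
      _ = p ^ i * (1 - p) ^ (n - i) := by rw [h2]; ring
  have key : (∑ i ∈ Finset.range (t + 1), (n.choose i : ℝ)) *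
      (p ^ t * (1 - p) ^ (n - t)) ≤ 1 := by
    rw [Finset.sum_mul]
    calc ∑ i ∈ Finset.range (t + 1), (n.choose i : ℝ) * (p ^ t * (1 - p) ^ (n - t))
        ≤ ∑ i ∈ Finset.range (t + 1), (n.choose i : ℝ) * (p ^ i * (1 - p) ^ (n - i)) :=
          Finset.sum_le_sum fun i hi => mul_le_mul_of_nonneg_left
            (step1 i (Finset.mem_range_succ_iff.mp hi)) (by positivity)
      _ ≤ ∑ i ∈ Finset.range (n + 1), (n.choose i : ℝ) * (p ^ i * (1 - p) ^ (n - i)) :=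
          Finset.sum_le_sum_of_subset_of_nonneg
            (Finset.range_subset_range.mpr (by omega)) fun i _ _ => by positivity
      _ = (p + (1 - p)) ^ n := by
          rw [add_pow]
          exact Finset.sum_congr rfl fun i _ => by ring
      _ = 1 := by norm_num
  have hsum_le : (∑ i ∈ Finset.range (t + 1), (n.choose i : ℝ)) ≤
      (p ^ t * (1 - p) ^ (n - t))⁻¹ := by
    rw [← one_div, le_div_iff₀ hX0]
    exact key
  refine hsum_le.trans (le_of_eq ?_)
  -- (p^t (1-p)^(n-t))⁻¹ = 2 ^ (n * binEnt p)
  have hexp : (n : ℝ) * binEnt p = (-(t : ℝ)) * Real.logb 2 p +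
      (-(((n : ℝ) - t))) * Real.logb 2 (1 - p) := by
    unfold binEnt
    have h6 : (n : ℝ) * p = t := by rw [hp]; field_simp
    have h7 : (n : ℝ) * (1 - p) = (n : ℝ) - t := by rw [hp]; field_simp
    linear_combination (-Real.logb 2 p) * h6 + (-Real.logb 2 (1 - p)) * h7
  rw [hexp, Real.rpow_add (by norm_num : (0:ℝ) < 2)]
  rw [mul_comm (-(t:ℝ)) _, mul_comm (-(((n:ℝ) - t))) _]
  rw [Real.rpow_mul (by norm_num : (0:ℝ) ≤ 2), Real.rpow_mul (by norm_num : (0:ℝ) ≤ 2)]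
  rw [Real.rpow_logb (by norm_num) (by norm_num) hp0,
    Real.rpow_logb (by norm_num) (by norm_num) hq0]
  rw [Real.rpow_neg hp0.le, Real.rpow_neg hq0.le]
  rw [Real.rpow_natCast]
  have hnt : ((n : ℝ) - t) = ((n - t : ℕ) : ℝ) := by
    rw [Nat.cast_sub htn]
  rw [hnt, Real.rpow_natCast, mul_inv]

/-- For a uniformly random `k × n` generator matrix `G` over `F_2`,
the probability that some nonzero `u` satisfies `|ℓ ⊕ uG| ≤ t` is at most
`2^{n[H₂(t/n) − r/n]}`, where `r = n − k`. -/
theorem stmt5 (n k t : ℕ) (hn : 0 < n) (hk : 0 < k) (ht : 0 < t)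
    (hhalf : (t : ℝ) / n ≤ 1 / 2) (r : ℕ) (hr : r = n - k) (ℓ : Fin n → ZMod 2) :
    ((Nat.card {G : Matrix (Fin k) (Fin n) (ZMod 2) //
        ∃ u : Fin k → ZMod 2, u ≠ 0 ∧ hammingNorm (ℓ + Matrix.vecMul u G) ≤ t} : ℝ) /
      (Nat.card (Matrix (Fin k) (Fin n) (ZMod 2)) : ℝ)) ≤
    (2 : ℝ) ^ ((n : ℝ) * (binEnt ((t : ℝ) / n) - (r : ℝ) / n)) := by
  classical
  have hn' : (0:ℝ) < n := by exact_mod_cast hn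
  have hp0 : 0 < (t:ℝ)/n := div_pos (by exact_mod_cast ht) hn'
  have hp1 : (t:ℝ)/n < 1 := lt_of_le_of_lt hhalf (by norm_num)
  have hbe : 0 ≤ binEnt ((t:ℝ)/n) := binEnt_nonneg hp0 hp1
  set D := Fintype.card (Matrix (Fin k) (Fin n) (ZMod 2)) with hDdef
  have hDpos : 0 < D := Fintype.card_pos
  have hcardM : Nat.card (Matrix (Fin k) (Fin n) (ZMod 2)) = D := Nat.card_eq_fintype_card
  set N := Nat.card {G : Matrix (Fin k) (Fin n) (ZMod 2) //
      ∃ u : Fin k → ZMod 2, u ≠ 0 ∧ hammingNorm (ℓ + Matrix.vecMul u G) ≤ t} with hNdef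
  have hNf : N = Fintype.card {G : Matrix (Fin k) (Fin n) (ZMod 2) //
      ∃ u : Fin k → ZMod 2, u ≠ 0 ∧ hammingNorm (ℓ + Matrix.vecMul u G) ≤ t} :=
    Nat.card_eq_fintype_card
  rw [hcardM]
  by_cases hkn : k ≤ n
  · set B := Fintype.card {w : Fin n → ZMod 2 // hammingNorm (ℓ + w) ≤ t} with hBdef
    have hunion : Fintype.card {G : Matrix (Fin k) (Fin n) (ZMod 2) //
        ∃ u : Fin k → ZMod 2, u ≠ 0 ∧ hammingNorm (ℓ + Matrix.vecMul u G) ≤ t} ≤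
        ∑ u : Fin k → ZMod 2, (univ.filter fun G : Matrix (Fin k) (Fin n) (ZMod 2) =>
          u ≠ 0 ∧ hammingNorm (ℓ + Matrix.vecMul u G) ≤ t).card := by
      rw [Fintype.card_subtype]
      refine (Finset.card_le_card ?_).trans Finset.card_biUnion_le
      intro G hG
      simp only [Finset.mem_filter, Finset.mem_univ, true_and, Finset.mem_biUnion] at hG ⊢
      obtain ⟨u, hu⟩ := hG
      exact ⟨u, hu⟩
    have hterm : ∀ u : Fin k → ZMod 2,
        (univ.filter fun G : Matrix (Fin k) (Fin n) (ZMod 2) =>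
          u ≠ 0 ∧ hammingNorm (ℓ + Matrix.vecMul u G) ≤ t).card * 2 ^ n ≤ B * D := by
      intro u
      by_cases hu : u = 0
      · simp [hu]
      · have hfe : (univ.filter fun G : Matrix (Fin k) (Fin n) (ZMod 2) =>
            u ≠ 0 ∧ hammingNorm (ℓ + Matrix.vecMul u G) ≤ t) =
            univ.filter fun G : Matrix (Fin k) (Fin n) (ZMod 2) =>
              hammingNorm (ℓ + Matrix.vecMul u G) ≤ t :=
          Finset.filter_congr fun G _ => by simp [hu]
        rw [hfe, ← Fintype.card_subtype]
        rw [card_fixed_u (n := n) u hu (fun w => hammingNorm (ℓ + w) ≤ t)]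
    have hkey : N * 2 ^ n ≤ 2 ^ k * (B * D) := by
      calc N * 2 ^ n ≤ (∑ u : Fin k → ZMod 2,
            (univ.filter fun G : Matrix (Fin k) (Fin n) (ZMod 2) =>
              u ≠ 0 ∧ hammingNorm (ℓ + Matrix.vecMul u G) ≤ t).card) * 2 ^ n := by
            rw [hNf]; exact Nat.mul_le_mul_right _ hunion
        _ = ∑ u : Fin k → ZMod 2,
            ((univ.filter fun G : Matrix (Fin k) (Fin n) (ZMod 2) =>
              u ≠ 0 ∧ hammingNorm (ℓ + Matrix.vecMul u G) ≤ t).card * 2 ^ n) := by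
            rw [Finset.sum_mul]
        _ ≤ ∑ _u : Fin k → ZMod 2, (B * D) := Finset.sum_le_sum fun u _ => hterm u
        _ = 2 ^ k * (B * D) := by
            rw [Finset.sum_const, Finset.card_univ]
            simp [Fintype.card_fun]
    have hBreal : (B : ℝ) ≤ (2:ℝ) ^ ((n:ℝ) * binEnt ((t:ℝ)/n)) := by
      have e : {w : Fin n → ZMod 2 // hammingNorm (ℓ + w) ≤ t} ≃
          {w : Fin n → ZMod 2 // hammingNorm w ≤ t} :=
        (Equiv.addLeft ℓ).subtypeEquiv fun w => Iff.rfl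
      have h1 : B ≤ ∑ i ∈ Finset.range (t + 1), n.choose i :=
        (Fintype.card_congr e).le.trans (card_ball_le n t)
      have h2 : (B : ℝ) ≤ ∑ i ∈ Finset.range (t + 1), (n.choose i : ℝ) := by
        push_cast
        exact_mod_cast h1
      exact h2.trans (sum_choose_le_two_rpow n t ht hn hhalf)
    have hRHS : (2:ℝ) ^ ((n:ℝ) * (binEnt ((t:ℝ)/n) - (r:ℝ)/n)) =
        ((2:ℝ) ^ k * (2:ℝ) ^ ((n:ℝ) * binEnt ((t:ℝ)/n))) / (2:ℝ) ^ n := by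
      have hrr : (r:ℝ) = (n:ℝ) - k := by rw [hr, Nat.cast_sub hkn]
      rw [show (n:ℝ) * (binEnt ((t:ℝ)/n) - (r:ℝ)/n) =
          ((k:ℝ) + (n:ℝ) * binEnt ((t:ℝ)/n)) - (n:ℝ) by rw [hrr]; field_simp; ring]
      rw [Real.rpow_sub (by norm_num : (0:ℝ) < 2), Real.rpow_add (by norm_num : (0:ℝ) < 2),
        Real.rpow_natCast, Real.rpow_natCast]
    rw [hRHS]
    have h2n : (0:ℝ) < (2:ℝ) ^ n := by positivity
    have hD' : (0:ℝ) < (D:ℝ) := by exact_mod_cast hDpos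
    calc (N:ℝ) / (D:ℝ) ≤ ((2:ℝ) ^ k * (B:ℝ)) / (2:ℝ) ^ n := by
          rw [div_le_div_iff₀ hD' h2n]
          calc (N:ℝ) * (2:ℝ) ^ n ≤ (2:ℝ) ^ k * ((B:ℝ) * (D:ℝ)) := by exact_mod_cast hkey
            _ = (2:ℝ) ^ k * (B:ℝ) * (D:ℝ) := by ring
      _ ≤ ((2:ℝ) ^ k * (2:ℝ) ^ ((n:ℝ) * binEnt ((t:ℝ)/n))) / (2:ℝ) ^ n := by
          gcongr
  · have hr0 : r = 0 := by omega
    have hle : N ≤ D := by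
      rw [hNf]; exact Fintype.card_subtype_le _
    have h1 : (N:ℝ) / (D:ℝ) ≤ 1 := by
      rw [div_le_one (by exact_mod_cast hDpos)]
      exact_mod_cast hle
    refine h1.trans ?_
    rw [hr0]
    simp only [Nat.cast_zero, zero_div, sub_zero]
    calc (1:ℝ) = 2 ^ (0:ℝ) := by rw [Real.rpow_zero]
      _ ≤ 2 ^ ((n:ℝ) * binEnt ((t:ℝ)/n)) :=
        Real.rpow_le_rpow_of_exponent_le (by norm_num) (mul_nonneg hn'.le hbe)
end

section
/- For a binary linear code C ⊆ F_2^n and an error word e with |e| ≤ t: if nearest-codeword decoding of e fails (i.e., 0 is not the unique closest codeword to e), then there exists z ∈ e + C with z ≠ e and |z| ≤ t. Consequently, for a random [n,k] code with r = n − k and 0 ≤ t/n ≤ 1/2, the probability that C cannot correct e is at most 2^{n[H_2(t/n) − r/n]}. -/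
open Finset Function Matrix

def DecodingFails {ι F : Type*} [Fintype ι] [Zero F] [DecidableEq F] (C : Set (ι → F))
    (e : ι → F) : Prop :=
  ¬ ∀ c ∈ C, c ≠ 0 → hammingNorm e < hammingDist e c

section Binary

variable {ι : Type*} [Fintype ι]

lemma hammingDist_eq_hammingNorm_add (x y : ι → ZMod 2) :
    hammingDist x y = hammingNorm (x + y) := by
  rw [hammingDist_eq_hammingNorm, show -x = x from funext fun i => ZMod.neg_eq_self_mod_two (x i)]

lemma DecodingFails.exists_ne_zero_hammingNorm_add_le {C : Set (ι → ZMod 2)} {e : ι → ZMod 2}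
    (h : DecodingFails C e) : ∃ c ∈ C, c ≠ 0 ∧ hammingNorm (e + c) ≤ hammingNorm e := by
  unfold DecodingFails at h
  push Not at h
  obtain ⟨c, hc, hc0, hle⟩ := h
  exact ⟨c, hc, hc0, hammingDist_eq_hammingNorm_add e c ▸ hle⟩

lemma injective_filter_ne_zero :
    Injective fun z : ι → ZMod 2 => ({i | z i ≠ 0} : Finset ι) := by
  intro z w h
  funext i
  have hi := congrArg (i ∈ ·) h
  simp only [mem_filter, mem_univ, true_and, eq_iff_iff] at hi
  revert hi
  generalize z i = a
  generalize w i = b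
  revert a b
  decide

lemma card_hammingNorm_le_le [DecidableEq ι] (t : ℕ) :
    #{z : ι → ZMod 2 | hammingNorm z ≤ t} ≤ ∑ i ∈ range (t + 1), (Fintype.card ι).choose i := by
  calc #{z : ι → ZMod 2 | hammingNorm z ≤ t}
      ≤ #((range (t + 1)).biUnion fun i => powersetCard i (univ : Finset ι)) := by
        refine card_le_card_of_injOn (fun z => ({i | z i ≠ 0} : Finset ι)) (fun z hz => ?_)
          injective_filter_ne_zero.injOn
        simpa [Nat.lt_succ_iff, hammingNorm] using hz
    _ ≤ ∑ i ∈ range (t + 1), (Fintype.card ι).choose i := by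
        refine card_biUnion_le.trans_eq (sum_congr rfl fun i _ => ?_)
        rw [card_powersetCard, card_univ]

end Binary

section Fibres

variable {α H : Type*} [AddGroup α] [AddGroup H] [Fintype α] [Fintype H] [DecidableEq H]
  {f : α →+ H}

lemma AddMonoidHom.card_filter_eq_mul_card_of_surjective (hf : Surjective f) (h : H) :
    #{x | f x = h} * Fintype.card H = Fintype.card α := by
  have := f.ker.card_mul_index
  rw [AddSubgroup.index_ker, AddMonoidHom.range_eq_top.2 hf, AddSubgroup.card_top,
    ← Nat.card_congr (f.fiberEquivKerOfSurjective hf h)] at this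
  rw [← Fintype.card_subtype, ← Nat.card_eq_fintype_card, ← Nat.card_eq_fintype_card,
    ← Nat.card_eq_fintype_card]
  exact this

lemma AddMonoidHom.card_filter_mem_mul_card_of_surjective (hf : Surjective f) (s : Finset H) :
    #{x | f x ∈ s} * Fintype.card H = #s * Fintype.card α := by
  rw [card_eq_sum_card_fiberwise (f := f) (t := s) (fun x hx => by simpa using hx), sum_mul,
    sum_const_nat fun h hh => ?_]
  rw [filter_filter, ← card_filter_eq_mul_card_of_surjective hf h]
  congr 2
  ext x
  simp only [mem_filter, mem_univ, true_and, and_iff_right_iff_imp]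
  exact fun hx => hx ▸ hh

end Fibres

section RandomGenerator

variable {m n K : Type*} [Fintype m] [DecidableEq m]

lemma Matrix.vecMul_surjective [DivisionRing K] {u : m → K} (hu : u ≠ 0) :
    Surjective fun G : Matrix m n K => u ᵥ* G := by
  obtain ⟨j, hj⟩ := Function.ne_iff.1 hu
  intro v
  refine ⟨vecMulVec (Pi.single j (u j)⁻¹) v, funext fun c => ?_⟩
  simp [vecMul, dotProduct, vecMulVec_apply, Pi.single_apply, ← mul_assoc, mul_inv_cancel₀ hj]

lemma Matrix.card_filter_exists_vecMul_mem_le [Fintype n] [DecidableEq n] [DivisionRing K]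
    [Fintype K] [DecidableEq K] (s : Finset (n → K)) :
    #{G : Matrix m n K | ∃ u ≠ 0, u ᵥ* G ∈ s} * Fintype.card (n → K)
      ≤ Fintype.card (m → K) * #s * Fintype.card (Matrix m n K) := by
  calc #{G : Matrix m n K | ∃ u ≠ 0, u ᵥ* G ∈ s} * Fintype.card (n → K)
      ≤ (∑ u ∈ ({u | u ≠ 0} : Finset (m → K)), #{G : Matrix m n K | u ᵥ* G ∈ s})
          * Fintype.card (n → K) := by
        gcongr
        refine (card_le_card fun G hG => ?_).trans card_biUnion_le
        simpa using hG
    _ = ∑ u ∈ ({u | u ≠ 0} : Finset (m → K)), #s * Fintype.card (Matrix m n K) := by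
        rw [sum_mul]
        refine sum_congr rfl fun u hu => ?_
        exact AddMonoidHom.card_filter_mem_mul_card_of_surjective
          (f := AddMonoidHom.mk' (u ᵥ* ·) fun A B => vecMul_add A B u)
          (vecMul_surjective (by simpa using hu)) s
    _ ≤ Fintype.card (m → K) * #s * Fintype.card (Matrix m n K) := by
        rw [sum_const, smul_eq_mul, mul_assoc]
        gcongr
        exact card_le_univ _

lemma card_decodingFails_div_card_mul_le [Fintype n] [DecidableEq n] {t : ℕ} {e : n → ZMod 2}
    (he : hammingNorm e ≤ t) :
    (Nat.card {G : Matrix m n (ZMod 2) // DecodingFails (Set.range (· ᵥ* G)) e} : ℝ)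
        / Nat.card (Matrix m n (ZMod 2)) * 2 ^ Fintype.card n
      ≤ 2 ^ Fintype.card m * ∑ i ∈ range (t + 1), ((Fintype.card n).choose i : ℝ) := by
  classical
  set s : Finset (n → ZMod 2) := {v | hammingNorm (e + v) ≤ t}
  have hs : #s ≤ ∑ i ∈ range (t + 1), (Fintype.card n).choose i :=
    (card_le_card_of_injOn (e + ·) (fun v hv => by simpa [s] using hv)
      (add_right_injective e).injOn).trans (card_hammingNorm_le_le t)
  have hcount :
      #{G : Matrix m n (ZMod 2) | DecodingFails (Set.range (· ᵥ* G)) e} * 2 ^ Fintype.card n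
        ≤ 2 ^ Fintype.card m * (∑ i ∈ range (t + 1), (Fintype.card n).choose i)
          * Fintype.card (Matrix m n (ZMod 2)) := by
    calc _ ≤ #{G : Matrix m n (ZMod 2) | ∃ u ≠ 0, u ᵥ* G ∈ s} * Fintype.card (n → ZMod 2) := by
          refine Nat.mul_le_mul (card_le_card (monotone_filter_right _ fun G _ hG => ?_))
            (by simp)
          obtain ⟨c, ⟨u, rfl⟩, hc0, hle⟩ := DecodingFails.exists_ne_zero_hammingNorm_add_le hG
          refine ⟨u, ?_, by simpa [s] using hle.trans he⟩
          rintro rfl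
          exact hc0 (zero_vecMul G)
      _ ≤ _ := (card_filter_exists_vecMul_mem_le s).trans <| by
          simp only [Fintype.card_pi, ZMod.card, prod_const, card_univ]
          gcongr
  have hN : (0 : ℝ) < Nat.card (Matrix m n (ZMod 2)) := by exact_mod_cast Nat.card_pos
  rw [div_mul_eq_mul_div, div_le_iff₀ hN, Nat.card_eq_fintype_card, Nat.card_eq_fintype_card,
    Fintype.card_subtype]
  exact_mod_cast hcount

end RandomGenerator

lemma pow_mul_pow_sub_le_pow_mul_pow_sub {p q : ℝ} (hp : 0 ≤ p) (hpq : p ≤ q) {i t n : ℕ}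
    (hit : i ≤ t) (htn : t ≤ n) : p ^ t * q ^ (n - t) ≤ p ^ i * q ^ (n - i) := by
  have hq : 0 ≤ q := hp.trans hpq
  calc p ^ t * q ^ (n - t) = p ^ i * (p ^ (t - i) * q ^ (n - t)) := by
        rw [← mul_assoc, ← pow_add, Nat.add_sub_cancel' hit]
    _ ≤ p ^ i * (q ^ (t - i) * q ^ (n - t)) := by gcongr
    _ = p ^ i * q ^ (n - i) := by rw [← pow_add]; congr 2; omega

lemma sum_range_choose_mul_pow_mul_pow_sub_le_one {p : ℝ} (hp : 0 ≤ p) (hp2 : p ≤ 1 / 2)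
    {t n : ℕ} (htn : t ≤ n) :
    (∑ i ∈ range (t + 1), (n.choose i : ℝ)) * (p ^ t * (1 - p) ^ (n - t)) ≤ 1 := by
  have hq : 0 ≤ 1 - p := by linarith
  calc (∑ i ∈ range (t + 1), (n.choose i : ℝ)) * (p ^ t * (1 - p) ^ (n - t))
      ≤ ∑ i ∈ range (t + 1), n.choose i * (p ^ i * (1 - p) ^ (n - i)) := by
        rw [sum_mul]
        refine sum_le_sum fun i hi => mul_le_mul_of_nonneg_left ?_ (Nat.cast_nonneg _)
        exact pow_mul_pow_sub_le_pow_mul_pow_sub hp (by linarith)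
          (Nat.lt_succ_iff.1 (mem_range.1 hi)) htn
    _ ≤ ∑ i ∈ range (n + 1), n.choose i * (p ^ i * (1 - p) ^ (n - i)) :=
        sum_le_sum_of_subset_of_nonneg (range_subset_range.2 (by omega)) fun i _ _ => by positivity
    _ = (p + (1 - p)) ^ n := by rw [add_pow]; exact sum_congr rfl fun i _ => by ring
    _ = 1 := by rw [add_sub_cancel, one_pow]

lemma two_rpow_mul_binEnt {t n : ℕ} (ht : 0 < t) (htn : t < n) :
    (2 : ℝ) ^ (n * binEnt (t / n)) = ((t / n) ^ t * (1 - t / n) ^ (n - t) : ℝ)⁻¹ := by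
  have hn : (0 : ℝ) < n := by exact_mod_cast ht.trans htn
  set p : ℝ := t / n
  have hp : 0 < p := by positivity
  have hq : 0 < 1 - p := by rw [sub_pos, div_lt_one hn]; exact_mod_cast htn
  have hexp : n * binEnt p = Real.logb 2 p * (-t) + Real.logb 2 (1 - p) * (-(n - t : ℕ)) := by
    rw [Nat.cast_sub htn.le]
    have : (n : ℝ) * p = t := mul_div_cancel₀ _ hn.ne'
    unfold binEnt
    linear_combination (-Real.logb 2 p + Real.logb 2 (1 - p)) * this
  rw [hexp, Real.rpow_add two_pos, Real.rpow_mul zero_le_two, Real.rpow_mul zero_le_two,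
    Real.rpow_logb two_pos (by norm_num) hp, Real.rpow_logb two_pos (by norm_num) hq,
    Real.rpow_neg hp.le, Real.rpow_neg hq.le, Real.rpow_natCast, Real.rpow_natCast, mul_inv]

theorem sum_range_choose_le_two_rpow_binEnt {t n : ℕ} (h : (t : ℝ) / n ≤ 1 / 2) :
    ∑ i ∈ range (t + 1), (n.choose i : ℝ) ≤ 2 ^ (n * binEnt (t / n)) := by
  rcases Nat.eq_zero_or_pos t with rfl | ht
  · simp [binEnt]
  rcases Nat.eq_zero_or_pos n with rfl | hn
  · simp [sum_range_succ', binEnt]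
  have hn' : (0 : ℝ) < n := by exact_mod_cast hn
  have htn : t < n := by
    rw [div_le_iff₀ hn'] at h
    exact_mod_cast (show (t : ℝ) < n by linarith)
  have hpos : (0 : ℝ) < (t / n) ^ t * (1 - t / n) ^ (n - t) := by
    have : (0 : ℝ) < 1 - t / n := by linarith
    positivity
  rw [two_rpow_mul_binEnt ht htn, ← one_div, le_div_iff₀ hpos]
  exact sum_range_choose_mul_pow_mul_pow_sub_le_one (by positivity) h htn.le

/-- For `k > n`, `r = n - k` truncates to `0` and the bound comes from `x ≤ 1` instead. -/
lemma le_two_rpow_mul_sub_div {x S H : ℝ} {n k r : ℕ} (hr : r = n - k) (hx : x ≤ 1)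
    (hxS : x * 2 ^ n ≤ 2 ^ k * S) (hS : 1 ≤ S) (hSH : S ≤ 2 ^ (n * H)) :
    x ≤ 2 ^ (n * (H - r / n)) := by
  have hexp : (n : ℝ) * (H - r / n) = n * H - r := by
    rcases eq_or_ne n 0 with rfl | hn
    · simp [hr]
    · field_simp
  rw [hexp, Real.rpow_sub two_pos, Real.rpow_natCast, le_div_iff₀ (by positivity)]
  rcases le_or_gt k n with hkn | hnk
  · have h2n : (2 : ℝ) ^ n = 2 ^ k * 2 ^ r := by rw [← pow_add, hr, Nat.add_sub_cancel' hkn]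
    refine le_of_mul_le_mul_left ?_ (pow_pos two_pos k)
    calc 2 ^ k * (x * 2 ^ r) = x * 2 ^ n := by rw [h2n]; ring
      _ ≤ 2 ^ k * S := hxS
      _ ≤ 2 ^ k * 2 ^ (n * H) := by gcongr
  · rw [hr, Nat.sub_eq_zero_of_le hnk.le, pow_zero, mul_one]
    linarith

theorem stmt8_general (n k t : ℕ)
    (hhalf : (t : ℝ) / n ≤ 1 / 2) (r : ℕ) (hr : r = n - k)
    (e : Fin n → ZMod 2) (he : hammingNorm e ≤ t) :
    (∀ C : Submodule (ZMod 2) (Fin n → ZMod 2),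
        ¬ (∀ c ∈ C, c ≠ 0 → hammingNorm e < hammingDist e c) →
        ∃ z : Fin n → ZMod 2, (∃ c ∈ C, z = e + c) ∧ z ≠ e ∧ hammingNorm z ≤ t) ∧
    ((Nat.card {G : Matrix (Fin k) (Fin n) (ZMod 2) //
        ¬ (∀ c ∈ Set.range (fun u : Fin k → ZMod 2 => Matrix.vecMul u G),
            c ≠ 0 → hammingNorm e < hammingDist e c)} : ℝ) /
      (Nat.card (Matrix (Fin k) (Fin n) (ZMod 2)) : ℝ) ≤
      (2 : ℝ) ^ ((n : ℝ) * (binEnt ((t : ℝ) / n) - (r : ℝ) / n))) := by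
  refine ⟨fun C hC => ?_, ?_⟩
  · obtain ⟨c, hc, hc0, hle⟩ :=
      DecodingFails.exists_ne_zero_hammingNorm_add_le (C := (C : Set (Fin n → ZMod 2))) hC
    exact ⟨e + c, ⟨c, hc, rfl⟩, by simpa using hc0, hle.trans he⟩
  have hunion := card_decodingFails_div_card_mul_le (m := Fin k) he
  simp only [Fintype.card_fin] at hunion
  refine le_two_rpow_mul_sub_div hr ?_ hunion ?_ (sum_range_choose_le_two_rpow_binEnt hhalf)
  · exact div_le_one_of_le₀ (by exact_mod_cast Finite.card_subtype_le _) (Nat.cast_nonneg _)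
  · simpa using single_le_sum (f := fun i => (n.choose i : ℝ)) (fun i _ => by positivity)
      (mem_range.2 t.succ_pos)

/-- (i) Deterministically, for a binary linear code `C` and error word `e`
with `|e| ≤ t`: if nearest-codeword decoding of `e` fails (`0` is not the unique closest
codeword to `e`), then some `z ∈ e + C` has `z ≠ e` and `|z| ≤ t`.
(ii) Consequently, for a random `[n,k]` code given by a uniformly random generator matrix,
with `r = n - k` and `t/n ≤ 1/2`, the probability that the code cannot correct `e` is at
most `2^{n[H₂(t/n) − r/n]}`. -/
theorem stmt8 (n k t : ℕ) (hn : 0 < n) (hk : 0 < k) (ht : 0 < t)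
    (hhalf : (t : ℝ) / n ≤ 1 / 2) (r : ℕ) (hr : r = n - k)
    (e : Fin n → ZMod 2) (he : hammingNorm e ≤ t) :
    (∀ C : Submodule (ZMod 2) (Fin n → ZMod 2),
        ¬ (∀ c ∈ C, c ≠ 0 → hammingNorm e < hammingDist e c) →
        ∃ z : Fin n → ZMod 2, (∃ c ∈ C, z = e + c) ∧ z ≠ e ∧ hammingNorm z ≤ t) ∧
    ((Nat.card {G : Matrix (Fin k) (Fin n) (ZMod 2) //
        ¬ (∀ c ∈ Set.range (fun u : Fin k → ZMod 2 => Matrix.vecMul u G),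
            c ≠ 0 → hammingNorm e < hammingDist e c)} : ℝ) /
      (Nat.card (Matrix (Fin k) (Fin n) (ZMod 2)) : ℝ) ≤
      (2 : ℝ) ^ ((n : ℝ) * (binEnt ((t : ℝ) / n) - (r : ℝ) / n))) :=
  stmt8_general n k t hhalf r hr e he
end

section
/- (Hoeffding sampling bound for two parts of a partition) Let c ∈ {0,1}^{n+n'} be a fixed bit string, and choose uniformly at random a subset A of {1,…,n+n'} of size n, with B its complement of size n'. Let |C_A| and |C_B| denote the numbers of 1-bits of c in positions A and B respectively. Then for any p > 0 and ε > 0: Pr[ (|C_A|/n ≥ p + ε) ∧ (|C_B|/n' ≤ p) ] ≤ exp(−2 (n'/(n+n'))² n ε²). -/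
/-! Both conditions together force `|C_A| ≥ n (μ + δ)`, where `μ = |C| / (n + n')` is the
overall density of ones and `δ = n' ε / (n + n')`. Subsets with that many ones are counted by a
Chernoff argument. Chvátal's double counting gives `∑_A y ^ |A ∩ C| ≤ C(N, n) (1 + μ (y - 1)) ^ n`:
the moment generating function of sampling without replacement is dominated by that of sampling
with replacement. Hoeffding's lemma for a Bernoulli variable bounds the latter by
`exp (n (μ t + t² / 8))`, and `t = 4 δ` yields `exp (-2 n δ²)`. -/

open Finset Real MeasureTheory ProbabilityTheory

namespace Nat

theorem choose_mul_pow_le_choose_mul_pow {m N : ℕ} (h : m ≤ N) (j : ℕ) :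
    m.choose j * N ^ j ≤ N.choose j * m ^ j := by
  induction j with
  | zero => simp
  | succ j ih =>
    have hstep : (m - j) * N ≤ (N - j) * m := by
      rw [Nat.sub_mul, Nat.sub_mul, Nat.mul_comm N m]
      exact Nat.sub_le_sub_left (Nat.mul_le_mul_left j h) _
    refine Nat.le_of_mul_le_mul_right ?_ j.succ_pos
    calc m.choose (j + 1) * N ^ (j + 1) * (j + 1)
        = (m.choose j * N ^ j) * ((m - j) * N) := by
          linear_combination N ^ (j + 1) * Nat.choose_succ_right_eq m j
      _ ≤ (N.choose j * m ^ j) * ((N - j) * m) := Nat.mul_le_mul ih hstep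
      _ = N.choose (j + 1) * m ^ (j + 1) * (j + 1) := by
          linear_combination m ^ (j + 1) * (Nat.choose_succ_right_eq N j).symm

theorem cast_choose_le_cast_choose_mul_div_pow {m N : ℕ} (h : m ≤ N) (j : ℕ) :
    (m.choose j : ℝ) ≤ N.choose j * ((m : ℝ) / N) ^ j := by
  rcases N.eq_zero_or_pos with rfl | hN
  · obtain rfl : m = 0 := Nat.le_zero.mp h
    cases j <;> simp
  rw [div_pow, ← mul_div_assoc, le_div_iff₀ (by positivity)]
  exact_mod_cast choose_mul_pow_le_choose_mul_pow h j

theorem cast_choose_mul_choose_sub_le {m N n j : ℕ} (hmN : m ≤ N) (hjn : j ≤ n) :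
    (m.choose j * (N - j).choose (n - j) : ℝ) ≤ N.choose n * (n.choose j * ((m : ℝ) / N) ^ j) := by
  have hsplit : (N.choose n * n.choose j : ℝ) = N.choose j * (N - j).choose (n - j) := by
    exact_mod_cast Nat.choose_mul hjn
  calc (m.choose j * (N - j).choose (n - j) : ℝ)
      ≤ N.choose j * ((m : ℝ) / N) ^ j * (N - j).choose (n - j) := by
        gcongr; exact cast_choose_le_cast_choose_mul_div_pow hmN j
    _ = N.choose n * (n.choose j * ((m : ℝ) / N) ^ j) := by
        linear_combination ((m : ℝ) / N) ^ j * hsplit.symm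

end Nat

theorem pow_eq_sum_range_choose_mul {R : Type*} [CommRing R] (y : R) {k n : ℕ} (hkn : k ≤ n) :
    y ^ k = ∑ j ∈ range (n + 1), (y - 1) ^ j * k.choose j := by
  rw [← sub_add_cancel y 1, add_pow, add_sub_cancel_right]
  refine sum_subset (range_subset_range.mpr (by omega)) (fun j _ hj => ?_) |>.trans
    (sum_congr rfl fun j _ => by rw [one_pow, mul_one])
  rw [Nat.choose_eq_zero_of_lt (by simpa using hj), Nat.cast_zero, mul_zero]

theorem one_add_mul_exp_sub_one_le {q : ℝ} (hq0 : 0 ≤ q) (hq1 : q ≤ 1) (t : ℝ) :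
    1 + q * (exp t - 1) ≤ exp (q * t + t ^ 2 / 8) := by
  set P : Measure ℝ := Ber(1, 0, ⟨q, hq0, hq1⟩)
  have hbdd : ∀ᵐ z ∂P, z ∈ Set.Icc (0 : ℝ) 1 := by
    rw [ae_iff]
    exact bernoulliMeasure_apply_of_notMem_of_notMem _ measurableSet_Icc.compl
      (by simp) (by simp)
  have hmean : P[id] = q := by simp [P, integral_bernoulliMeasure]
  have hoeffding := (hasSubgaussianMGF_of_mem_Icc aemeasurable_id hbdd).mgf_le t
  have hmgf : mgf (fun z => id z - P[id]) P t = exp (-(q * t)) * (1 + q * (exp t - 1)) := by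
    rw [mgf, hmean, integral_bernoulliMeasure, show t * (id 1 - q) = t + -(q * t) by rw [id_eq]; ring,
      show t * (id 0 - q) = -(q * t) by rw [id_eq]; ring, exp_add]
    simp only [smul_eq_mul]
    ring
  have hvar : ((‖(1 : ℝ) - 0‖₊ / 2) ^ 2 : NNReal) * t ^ 2 / 2 = t ^ 2 / 8 := by
    rw [sub_zero, nnnorm_one]; push_cast; ring
  rw [hmgf, hvar, ← le_div_iff₀' (exp_pos _), ← exp_sub] at hoeffding
  simpa [sub_eq_add_neg, add_comm] using hoeffding

theorem card_filter_le_exp_neg_mul_sum_exp {ι : Type*} (S : Finset ι) (f : ι → ℝ) (s : ℝ)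
    {t : ℝ} (ht : 0 ≤ t) :
    (#{i ∈ S | s ≤ f i} : ℝ) ≤ exp (-(t * s)) * ∑ i ∈ S, exp (t * f i) := by
  rw [card_filter, Nat.cast_sum, mul_sum]
  refine sum_le_sum fun i _ => ?_
  split_ifs with hi
  · rw [Nat.cast_one, ← exp_add, one_le_exp_iff]
    nlinarith
  · rw [Nat.cast_zero]
    positivity

section SubsetsOfFintype

variable {α : Type*} [Fintype α] [DecidableEq α]

theorem card_powersetCard_filter_superset (S : Finset α) {k : ℕ} (hSk : #S ≤ k) :
    #{A ∈ powersetCard k univ | S ⊆ A} = (Fintype.card α - #S).choose (k - #S) := by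
  rw [← card_compl S, ← card_powersetCard (k - #S) Sᶜ]
  have hdisj {B : Finset α} (hB : B ⊆ Sᶜ) : Disjoint B S :=
    disjoint_left.mpr fun _ hx => mem_compl.mp (hB hx)
  refine card_nbij' (· \ S) (· ∪ S) (fun A hA => ?_) (fun B hB => ?_) (fun A hA => ?_)
    (fun B hB => ?_)
  · simp only [mem_coe, mem_filter, mem_powersetCard] at hA ⊢
    refine ⟨fun x hx => mem_compl.mpr (mem_sdiff.mp hx).2, ?_⟩
    rw [card_sdiff_of_subset hA.2, hA.1.2]
  · simp only [mem_coe, mem_filter, mem_powersetCard] at hB ⊢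
    refine ⟨⟨subset_univ _, ?_⟩, subset_union_right⟩
    rw [card_union_of_disjoint (hdisj hB.1), hB.2]
    omega
  · exact sdiff_union_of_subset (mem_filter.mp hA).2
  · exact union_sdiff_cancel_right (hdisj (mem_powersetCard.mp hB).1)

theorem sum_powersetCard_choose_card_inter (C : Finset α) {n j : ℕ} (hjn : j ≤ n) :
    ∑ A ∈ powersetCard n univ, (#(A ∩ C)).choose j
      = (#C).choose j * (Fintype.card α - j).choose (n - j) := by
  have hcount (A : Finset α) : (#(A ∩ C)).choose j = #{S ∈ powersetCard j C | S ⊆ A} := by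
    rw [← card_powersetCard]
    congr 1
    ext S
    simp only [mem_powersetCard, mem_filter, subset_inter_iff]
    tauto
  simp_rw [hcount, card_filter]
  rw [sum_comm, ← smul_eq_mul, ← card_powersetCard j C, ← sum_const]
  refine sum_congr rfl fun S hS => ?_
  obtain ⟨-, rfl⟩ := mem_powersetCard.mp hS
  rw [← card_filter, card_powersetCard_filter_superset S hjn]

theorem sum_powersetCard_pow_card_inter_le (C : Finset α) (n : ℕ) {y : ℝ} (hy : 1 ≤ y) :
    ∑ A ∈ powersetCard n univ, y ^ #(A ∩ C)
      ≤ (Fintype.card α).choose n * (1 + #C / Fintype.card α * (y - 1)) ^ n := by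
  set N := Fintype.card α
  have hCN : #C ≤ N := card_le_univ C
  have hexpand : ∀ A ∈ powersetCard n univ,
      y ^ #(A ∩ C) = ∑ j ∈ range (n + 1), (y - 1) ^ j * (#(A ∩ C)).choose j := fun A hA =>
    pow_eq_sum_range_choose_mul y <|
      (card_le_card inter_subset_left).trans (mem_powersetCard.mp hA).2.le
  rw [sum_congr rfl hexpand, sum_comm, add_comm (1 : ℝ), add_pow, mul_sum]
  refine sum_le_sum fun j hj => ?_
  have hjn : j ≤ n := Nat.lt_succ_iff.mp (mem_range.mp hj)
  rw [← mul_sum, ← Nat.cast_sum, sum_powersetCard_choose_card_inter C hjn, one_pow, mul_one,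
    Nat.cast_mul, mul_pow]
  calc _ ≤ (y - 1) ^ j * (N.choose n * (n.choose j * ((#C : ℝ) / N) ^ j)) :=
        mul_le_mul_of_nonneg_left (Nat.cast_choose_mul_choose_sub_le hCN hjn)
          (pow_nonneg (by linarith) j)
    _ = _ := by ring

theorem card_filter_powersetCard_le_choose_mul_exp (C : Finset α) (n : ℕ) {δ : ℝ}
    (hδ : 0 ≤ δ) :
    (#{A ∈ powersetCard n univ | n * (#C / Fintype.card α + δ) ≤ (#(A ∩ C) : ℝ)} : ℝ)
      ≤ (Fintype.card α).choose n * exp (-2 * n * δ ^ 2) := by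
  set μ : ℝ := #C / Fintype.card α
  have hμ0 : 0 ≤ μ := by positivity
  have hμ1 : μ ≤ 1 := div_le_one_of_le₀ (by exact_mod_cast card_le_univ C) (by positivity)
  have ht : 0 ≤ 4 * δ := by positivity
  calc _ ≤ exp (-(4 * δ * (n * (μ + δ)))) * ∑ A ∈ powersetCard n univ, exp (4 * δ * #(A ∩ C)) :=
        card_filter_le_exp_neg_mul_sum_exp _ (fun A => (#(A ∩ C) : ℝ)) _ ht
    _ = exp (-(4 * δ * (n * (μ + δ)))) * ∑ A ∈ powersetCard n univ, exp (4 * δ) ^ #(A ∩ C) := by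
        simp_rw [← exp_nat_mul, mul_comm]
    _ ≤ exp (-(4 * δ * (n * (μ + δ)))) *
          ((Fintype.card α).choose n * (1 + μ * (exp (4 * δ) - 1)) ^ n) := by
        gcongr
        exact sum_powersetCard_pow_card_inter_le C n (one_le_exp ht)
    _ ≤ exp (-(4 * δ * (n * (μ + δ)))) *
          ((Fintype.card α).choose n * exp (μ * (4 * δ) + (4 * δ) ^ 2 / 8) ^ n) := by
        have : 0 ≤ 1 + μ * (exp (4 * δ) - 1) := by nlinarith [one_le_exp ht]
        gcongr
        exact one_add_mul_exp_sub_one_le hμ0 hμ1 _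
    _ = (Fintype.card α).choose n * exp (-2 * n * δ ^ 2) := by
        rw [← exp_nat_mul, mul_left_comm, ← exp_add]
        ring_nf

end SubsetsOfFintype

theorem mul_add_div_le_of_add_le_div_of_div_le {a b n n' p ε : ℝ} (hn : 0 < n) (hn' : 0 < n')
    (ha : p + ε ≤ a / n) (hb : b / n' ≤ p) :
    n * ((a + b) / (n + n') + n' * ε / (n + n')) ≤ a := by
  rw [le_div_iff₀ hn] at ha
  rw [div_le_iff₀ hn'] at hb
  rw [← add_div, mul_div_assoc', div_le_iff₀ (by positivity)]
  nlinarith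

theorem stmt11_general (n n' : ℕ) (hn : 0 < n) (hn' : 0 < n') (c : Fin (n + n') → Bool)
    (p ε : ℝ) (hε : 0 < ε) :
    ((Nat.card {A : Finset (Fin (n + n')) // A.card = n ∧
        (p + ε ≤ ((A.filter fun i => c i = true).card : ℝ) / n) ∧
        (((Aᶜ.filter fun i => c i = true).card : ℝ) / n' ≤ p)} : ℝ) /
      (Nat.card {A : Finset (Fin (n + n')) // A.card = n} : ℝ)) ≤
    Real.exp (-2 * ((n' : ℝ) / ((n : ℝ) + n')) ^ 2 * n * ε ^ 2) := by
  set C : Finset (Fin (n + n')) := {i | c i = true}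
  have hfilter (A : Finset (Fin (n + n'))) : A.filter (fun i => c i = true) = A ∩ C := by
    rw [inter_filter, inter_univ]
  have hsplit (A : Finset (Fin (n + n'))) : #(A ∩ C) + #(Aᶜ ∩ C) = #C := by
    rw [← card_inter_add_card_sdiff C A, inter_comm C A, sdiff_eq_inter_compl, inter_comm C Aᶜ]
  have hevent : ({A | A.card = n ∧
        (p + ε ≤ ((A.filter fun i => c i = true).card : ℝ) / n) ∧
        (((Aᶜ.filter fun i => c i = true).card : ℝ) / n' ≤ p)} : Finset (Finset (Fin (n + n')))) ⊆
      {A ∈ powersetCard n (univ : Finset (Fin (n + n'))) |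
        n * (#C / Fintype.card (Fin (n + n')) + n' * ε / (n + n')) ≤ (#(A ∩ C) : ℝ)} := by
    intro A hA
    simp only [mem_filter, mem_univ, true_and, hfilter] at hA
    obtain ⟨hcard, ha, hb⟩ := hA
    refine mem_filter.mpr ⟨mem_powersetCard.mpr ⟨subset_univ A, hcard⟩, ?_⟩
    have := mul_add_div_le_of_add_le_div_of_div_le (by positivity) (by positivity) ha hb
    rw [Fintype.card_fin, Nat.cast_add n n']
    rwa [← Nat.cast_add #(A ∩ C), hsplit] at this
  rw [Nat.card_eq_fintype_card, Fintype.card_subtype, Nat.card_eq_fintype_card,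
    Fintype.card_subtype, univ_filter_card_eq (Fin (n + n')) n, card_powersetCard, card_univ,
    Fintype.card_fin, div_le_iff₀' (by exact_mod_cast Nat.choose_pos (n.le_add_right n'))]
  calc _ ≤ _ := by exact_mod_cast card_le_card hevent
    _ ≤ _ := card_filter_powersetCard_le_choose_mul_exp C n (δ := n' * ε / (n + n'))
        (by positivity)
    _ = _ := by rw [Fintype.card_fin]; ring_nf

/-- Hoeffding sampling bound for two parts of a partition:
for a fixed bit string `c` of length `n + n'` and a uniformly random `n`-element
subset `A` (with complement `B`), the probability that the fraction of 1-bits of `c`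
in `A` is at least `p + ε` while the fraction in `B` is at most `p` is at most
`exp(−2 (n'/(n+n'))² n ε²)`. -/
theorem stmt11 (n n' : ℕ) (hn : 0 < n) (hn' : 0 < n') (c : Fin (n + n') → Bool)
    (p ε : ℝ) (hp : 0 < p) (hε : 0 < ε) :
    ((Nat.card {A : Finset (Fin (n + n')) // A.card = n ∧
        (p + ε ≤ ((A.filter fun i => c i = true).card : ℝ) / n) ∧
        (((Aᶜ.filter fun i => c i = true).card : ℝ) / n' ≤ p)} : ℝ) /
      (Nat.card {A : Finset (Fin (n + n')) // A.card = n} : ℝ)) ≤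
    Real.exp (-2 * ((n' : ℝ) / ((n : ℝ) + n')) ^ 2 * n * ε ^ 2) :=
  stmt11_general n n' hn hn' c p ε hε
end
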